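/- arXiv:2110.01268 — 6 statements merged into one kernel-verified Lean document; each statement's English description precedes it below -/
import Mathlib

section
/- Let Σ be a finite alphabet and α : ℕ → Σ an infinite string in which every symbol occurs infinitely often. Suppose that: (a) there do not exist two distinct finite strings σ, τ of equal length, with τ a permutation (rearrangement) of σ, such that both σ and τ occur infinitely often as contiguous substrings of α; and (b) at least two distinct symbols occur infinitely often in α. Then there exist symbols b, d, e ∈ Σ with d ≠ b and e ≠ b such that for every n ∈ ℕ there exists m > n for which the finite string d·b^m·e (the symbol d, followed by m copies of b, followed by e) occurs as a contiguous substring of α. -/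
/-!
By pigeonhole, some word `w` of length `|A|(k+1)+1` occurs infinitely often, and `w` carries the
same letter `a` at two positions `p + k + 1 ≤ q`. Writing `w[p, q) = a·x`, the words `a·x` and
`x·a` are rearrangements of each other and both occur infinitely often, so they are equal, which
forces `a·x = a^(q-p)`. Hence for every `k` some letter `b` has runs of length at least `k`
occurring infinitely often. Such a run has occurrences of a letter `c ≠ b` on both sides, so it
extends to a maximal block `d·b^m·e`; a last pigeonhole over the finitely many triples `(b, d, e)`
makes the triple independent of `k`.
-/

/-- The finite string `σ` occurs in the infinite string `α` at position `i`. -/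
def OccursAt {A : Type*} (σ : List A) (α : ℕ → A) (i : ℕ) : Prop :=
  ∀ j (h : j < σ.length), σ.get ⟨j, h⟩ = α (i + j)

/-- The finite string `σ` occurs infinitely often (as a contiguous substring) in `α`. -/
def OccursInfinitelyOften {A : Type*} (σ : List A) (α : ℕ → A) : Prop :=
  {i : ℕ | OccursAt σ α i}.Infinite

/-- `τ` is a permutation (rearrangement) of `σ`: same length, and there is a bijection
`h` of the index set with `τ(i) = σ(h(i))`. -/
def IsRearrangement {A : Type*} (σ τ : List A) : Prop :=
  ∃ (hlen : σ.length = τ.length) (h : Equiv.Perm (Fin σ.length)),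
    ∀ i : Fin σ.length, τ.get (Fin.cast hlen i) = σ.get (h i)

open List

section Words

variable {A : Type*} {α : ℕ → A}

theorem occursAt_append {σ τ : List A} {i : ℕ} :
    OccursAt (σ ++ τ) α i ↔ OccursAt σ α i ∧ OccursAt τ α (i + σ.length) := by
  simp only [OccursAt, List.get_eq_getElem, List.length_append]
  constructor
  · intro h
    refine ⟨fun j hj => ?_, fun j hj => ?_⟩
    · simpa [List.getElem_append_left hj] using h j (by omega)
    · simpa [add_assoc] using h (σ.length + j) (by omega)
  · rintro ⟨h₁, h₂⟩ j hj
    rcases lt_or_ge j σ.length with hj' | hj'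
    · rw [List.getElem_append_left hj']
      exact h₁ j hj'
    · rw [List.getElem_append_right hj', h₂ _ (by omega)]
      congr 1
      omega

theorem occursAt_singleton {a : A} {i : ℕ} : OccursAt [a] α i ↔ α i = a := by
  simp [OccursAt, eq_comm]

theorem occursAt_replicate {b : A} {m i : ℕ} :
    OccursAt (replicate m b) α i ↔ ∀ j < m, α (i + j) = b := by
  simp [OccursAt, eq_comm]

theorem occursAt_ofFn {L i : ℕ} (u : Fin L → A) :
    OccursAt (ofFn u) α i ↔ ∀ j : Fin L, u j = α (i + j) := by
  simp [OccursAt, Fin.forall_iff]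

theorem occursInfinitelyOften_of_forall_occursAt_add {σ : List A} {S : Set ℕ} (hS : S.Infinite)
    (c : ℕ) (h : ∀ i ∈ S, OccursAt σ α (i + c)) : OccursInfinitelyOften σ α :=
  (hS.image (add_left_injective c).injOn).mono (by rintro _ ⟨i, hi, rfl⟩; exact h i hi)

theorem isRearrangement_ofFn_comp {L : ℕ} (u : Fin L → A) (e : Equiv.Perm (Fin L)) :
    IsRearrangement (ofFn u) (ofFn (u ∘ e)) := by
  have hL : (ofFn u).length = L := length_ofFn
  refine ⟨by simp, (finCongr hL).trans (e.trans (finCongr hL.symm)), fun i => ?_⟩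
  simp only [List.get_ofFn]
  rfl

theorem isRearrangement_cons_append_singleton (a : A) (l : List A) :
    IsRearrangement (a :: l) (l ++ [a]) := by
  have hcons : a :: l = ofFn (Fin.cons a l.get) := by rw [ofFn_cons, ofFn_get]
  have hsnoc : l ++ [a] = ofFn (Fin.cons a l.get ∘ finRotate (l.length + 1)) := by
    have : (Fin.cons a l.get ∘ finRotate (l.length + 1) : Fin (l.length + 1) → A) =
        Fin.snoc l.get a := (Fin.snoc_eq_cons_rotate l.get a).symm
    rw [this, ofFn_succ']
    simp
  rw [hsnoc, hcons]
  exact isRearrangement_ofFn_comp _ _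

theorem eq_replicate_of_cons_eq_append_singleton {a : A} {l : List A} (h : a :: l = l ++ [a]) :
    a :: l = replicate (l.length + 1) a := by
  have : Nonempty A := ⟨a⟩
  have hrot : (a :: l).rotate 1 = a :: l := by rw [rotate_cons_succ, rotate_zero, ← h]
  obtain ⟨b, hb⟩ := rotate_one_eq_self_iff_eq_replicate.mp hrot
  obtain rfl : a = b := (eq_replicate_iff.mp hb).2 a mem_cons_self
  exact hb

theorem exists_spaced_map_eq {B : Type*} [Fintype B] (f : ℕ → B) (d : ℕ) :
    ∃ p q, p + d ≤ q ∧ q ≤ Fintype.card B * d ∧ f p = f q := by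
  have key : ∀ x y : Fin (Fintype.card B + 1), x < y → f (x * d) = f (y * d) →
      ∃ p q, p + d ≤ q ∧ q ≤ Fintype.card B * d ∧ f p = f q := fun x y hxy hf =>
    ⟨x * d, y * d, by rw [← Nat.succ_mul]; exact Nat.mul_le_mul_right d hxy,
      Nat.mul_le_mul_right d (Nat.lt_succ_iff.mp y.2), hf⟩
  obtain ⟨x, y, hne, hf⟩ :=
    Fintype.exists_ne_map_eq_of_card_lt (fun x : Fin (Fintype.card B + 1) => f (x * d)) (by simp)
  rcases hne.lt_or_gt with hxy | hyx
  · exact key x y hxy hf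
  · exact key y x hyx hf.symm

theorem exists_infinite_setOf_forall_lt_eq [Finite A] (α : ℕ → A) (K : ℕ) :
    ∃ i₀, {i | ∀ t < K, α (i + t) = α (i₀ + t)}.Infinite := by
  obtain ⟨w, hw⟩ := Finite.exists_infinite_fiber fun i (t : Fin K) => α (i + t)
  rw [Set.infinite_coe_iff] at hw
  obtain ⟨i₀, hi₀⟩ := hw.nonempty
  refine ⟨i₀, hw.mono fun i hi t ht => ?_⟩
  exact (congr_fun hi ⟨t, ht⟩).trans (congr_fun hi₀ ⟨t, ht⟩).symm

theorem exists_replicate_occursInfinitelyOften [Fintype A]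
    (hnoperm : ¬ ∃ σ τ : List A, σ ≠ τ ∧ IsRearrangement σ τ ∧
      OccursInfinitelyOften σ α ∧ OccursInfinitelyOften τ α) (k : ℕ) :
    ∃ b m, k ≤ m ∧ OccursInfinitelyOften (replicate m b) α := by
  set K := Fintype.card A * (k + 1) + 1 with hK
  obtain ⟨i₀, hI⟩ := exists_infinite_setOf_forall_lt_eq α K
  obtain ⟨p, q, hpq, hq, hα⟩ := exists_spaced_map_eq (fun t => α (i₀ + t)) (k + 1)
  set a := α (i₀ + p)
  set x := ofFn fun j : Fin (q - p - 1) => α (i₀ + p + 1 + j)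
  have hx : ∀ i ∈ {i | ∀ t < K, α (i + t) = α (i₀ + t)},
      α (i + p) = a ∧ OccursAt x α (i + p + 1) ∧ α (i + q) = a := by
    intro i hi
    refine ⟨hi p (by omega), (occursAt_ofFn _).mpr fun j => ?_, (hi q (by omega)).trans hα.symm⟩
    simp only [add_assoc]
    exact (hi _ (by have := j.2; omega)).symm
  have hleft : OccursInfinitelyOften (a :: x) α :=
    occursInfinitelyOften_of_forall_occursAt_add hI p fun i hi => by
      rw [← singleton_append, occursAt_append, occursAt_singleton]
      exact ⟨(hx i hi).1, (hx i hi).2.1⟩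
  have hright : OccursInfinitelyOften (x ++ [a]) α :=
    occursInfinitelyOften_of_forall_occursAt_add hI (p + 1) fun i hi => by
      rw [occursAt_append, occursAt_singleton, length_ofFn, ← add_assoc,
        show i + p + 1 + (q - p - 1) = i + q by omega]
      exact ⟨(hx i hi).2.1, (hx i hi).2.2⟩
  have heq : a :: x = x ++ [a] := by
    by_contra hne
    exact hnoperm ⟨_, _, hne, isRearrangement_cons_append_singleton a x, hleft, hright⟩
  refine ⟨a, x.length + 1, by simp only [x, length_ofFn]; omega, ?_⟩
  rw [← eq_replicate_of_cons_eq_append_singleton heq]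
  exact hleft

theorem occursAt_cons_replicate_append {b : A} {l r : ℕ} (hlr : l < r)
    (hb : ∀ j, l < j → j < r → α j = b) :
    OccursAt ([α l] ++ replicate (r - l - 1) b ++ [α r]) α l := by
  simp only [occursAt_append, occursAt_singleton, occursAt_replicate, length_append,
    length_singleton, length_replicate, true_and]
  exact ⟨fun j hj => hb _ (by omega) (by omega), by congr 1; omega⟩

theorem exists_occursAt_bordered_replicate {b : A} {m i t₀ t₁ : ℕ}
    (hrun : OccursAt (replicate m b) α i) (ht₀ : t₀ < i) (hα₀ : α t₀ ≠ b)
    (ht₁ : i + m ≤ t₁) (hα₁ : α t₁ ≠ b) :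
    ∃ d e m', d ≠ b ∧ e ≠ b ∧ m ≤ m' ∧ ∃ j, OccursAt ([d] ++ replicate m' b ++ [e]) α j := by
  classical
  rw [occursAt_replicate] at hrun
  have hr : ∃ r, i ≤ r ∧ α r ≠ b := ⟨t₁, by omega, hα₁⟩
  set r := Nat.find hr
  set l := Nat.findGreatest (fun l => α l ≠ b) (i - 1)
  have hl : α l ≠ b := Nat.findGreatest_spec (P := fun l => α l ≠ b) (m := t₀) (by omega) hα₀
  have hli : l < i := by
    have := Nat.findGreatest_le (P := fun l => α l ≠ b) (i - 1)
    omega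
  obtain ⟨hir, hαr⟩ : i ≤ r ∧ α r ≠ b := Nat.find_spec hr
  have himr : i + m ≤ r := by
    by_contra h
    have := hrun (r - i) (by omega)
    rw [Nat.add_sub_cancel' hir] at this
    exact hαr this
  refine ⟨α l, α r, r - l - 1, hl, hαr, by omega, l,
    occursAt_cons_replicate_append (by omega) fun j hlj hjr => ?_⟩
  rcases lt_or_ge j i with hji | hij
  · by_contra h
    exact Nat.findGreatest_is_greatest hlj (by omega) h
  · by_contra h
    exact Nat.find_min hr hjr ⟨hij, h⟩

theorem exists_forall_of_forall_exists_of_antitone {B : Type*} [Finite B] {P : B → ℕ → Prop}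
    (hP : ∀ n, ∃ x, P x n) (hanti : ∀ x, Antitone (P x)) : ∃ x, ∀ n, P x n := by
  choose g hg using hP
  obtain ⟨x, hx⟩ := Finite.exists_infinite_fiber g
  rw [Set.infinite_coe_iff] at hx
  refine ⟨x, fun n => ?_⟩
  obtain ⟨n', hn', hnn'⟩ := hx.exists_gt n
  exact hanti x hnn'.le (hn' ▸ hg n')

theorem exists_bordered_replicate_occursAt [Fintype A] [Nontrivial A]
    (hall : ∀ a : A, {n : ℕ | α n = a}.Infinite)
    (hnoperm : ¬ ∃ σ τ : List A, σ ≠ τ ∧ IsRearrangement σ τ ∧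
      OccursInfinitelyOften σ α ∧ OccursInfinitelyOften τ α) (n : ℕ) :
    ∃ b d e : A, d ≠ b ∧ e ≠ b ∧ ∃ m > n, ∃ i, OccursAt ([d] ++ replicate m b ++ [e]) α i := by
  obtain ⟨b, m, hm, hocc⟩ := exists_replicate_occursInfinitelyOften hnoperm (n + 1)
  obtain ⟨c, hc⟩ := exists_ne b
  obtain ⟨t₀, ht₀⟩ := (hall c).nonempty
  obtain ⟨i, hi, ht₀i⟩ := hocc.exists_gt t₀
  obtain ⟨t₁, ht₁, hit₁⟩ := (hall c).exists_gt (i + m)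
  obtain ⟨d, e, m', hd, he, hmm', hj⟩ :=
    exists_occursAt_bordered_replicate hi ht₀i (ht₀ ▸ hc) hit₁.le (ht₁ ▸ hc)
  exact ⟨b, d, e, hd, he, m', by omega, hj⟩

end Words

/-- Combinatorial analysis: if every symbol of the finite alphabet occurs infinitely
often in `α`, no two distinct finite strings that are rearrangements of each other both
occur infinitely often in `α`, and at least two distinct symbols occur infinitely often
in `α`, then there are symbols `b, d, e` with `d ≠ b`, `e ≠ b` such that for every `n`
there is `m > n` for which `d·b^m·e` occurs in `α`. -/
theorem combinatorial_analysis {A : Type*} [Fintype A]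
    (α : ℕ → A) (hall : ∀ a : A, {n : ℕ | α n = a}.Infinite)
    (hnoperm : ¬ ∃ σ τ : List A, σ ≠ τ ∧ IsRearrangement σ τ ∧
      OccursInfinitelyOften σ α ∧ OccursInfinitelyOften τ α)
    (htwo : ∃ a b : A, a ≠ b ∧ {n : ℕ | α n = a}.Infinite ∧ {n : ℕ | α n = b}.Infinite) :
    ∃ b d e : A, d ≠ b ∧ e ≠ b ∧
      ∀ n : ℕ, ∃ m > n, ∃ i, OccursAt ([d] ++ List.replicate m b ++ [e]) α i := by
  obtain ⟨a, c, hac, -, -⟩ := htwo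
  have : Nontrivial A := ⟨a, c, hac⟩
  obtain ⟨⟨b, d, e⟩, h⟩ := exists_forall_of_forall_exists_of_antitone
    (P := fun (t : A × A × A) n => t.2.1 ≠ t.1 ∧ t.2.2 ≠ t.1 ∧
      ∃ m > n, ∃ i, OccursAt ([t.2.1] ++ replicate m t.1 ++ [t.2.2]) α i)
    (fun n => by
      obtain ⟨b, d, e, h⟩ := exists_bordered_replicate_occursAt hall hnoperm n
      exact ⟨(b, d, e), h⟩)
    (fun _ _ _ hnn' ⟨hd, he, m, hm, hi⟩ => ⟨hd, he, m, by omega, hi⟩)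
  exact ⟨b, d, e, (h 0).1, (h 0).2.1, fun n => (h n).2.2⟩
end

section
/- Let f : ℕ → ℕ be a function such that either f is almost constant (there exist c and N with f(x) = c for all x ≥ N) or f is almost the identity (there exists N with f(x) = x for all x ≥ N). Then for every linear order ≺ on ℕ that is isomorphic to the standard order on ℕ via an isomorphism φ, the image function f_φ := φ ∘ f ∘ φ⁻¹ is computable whenever ≺ is computable. -/
/-!
Outside the finite set `φ '' {0, …, N - 1}`, the function `φ ∘ f ∘ φ⁻¹` is the constant `φ c`
or the identity, and changing a computable function at finitely many points keeps it computable.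
-/

namespace Computable

variable {α σ : Type*} [Primcodable α] [Primcodable σ] [DecidableEq α]

theorem update {g : α → σ} (hg : Computable g) (x : α) (v : σ) :
    Computable (Function.update g x v) := by
  have hx : Computable fun a => decide (a = x) :=
    (Primrec.eq.comp Primrec.id (Primrec.const x)).decide.to_comp
  refine (cond hx (const v) hg).of_eq fun a => ?_
  by_cases hax : a = x <;> simp [hax]

theorem of_eq_off_finset {f g : α → σ} (hg : Computable g) (s : Finset α)
    (hfg : ∀ a ∉ s, f a = g a) : Computable f := by
  induction s using Finset.induction_on generalizing g with
  | empty => exact hg.of_eq fun a => (hfg a (Finset.notMem_empty a)).symm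
  | @insert x s _ ih =>
    refine ih (hg.update x (f x)) fun a ha => ?_
    by_cases hax : a = x
    · simp [hax]
    · simpa [hax] using hfg a (by simp [hax, ha])

end Computable

theorem Equiv.conj_eq_of_notMem_map {α β : Type*} (e : α ≃ β) {f g : α → α} {s : Finset α}
    (hfg : ∀ x ∉ s, f x = g x) {b : β} (hb : b ∉ s.map e.toEmbedding) :
    e (f (e.symm b)) = e (g (e.symm b)) := by
  rw [hfg]
  rintro hs
  exact hb (Finset.mem_map_equiv.2 hs)

theorem intrinsically_computable_of_almost_trivial_general (f : ℕ → ℕ)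
    (hf : (∃ c N, ∀ x ≥ N, f x = c) ∨ (∃ N, ∀ x ≥ N, f x = x))
    (φ : ℕ ≃ ℕ) :
    Computable fun a => φ (f (φ.symm a)) := by
  rcases hf with ⟨c, N, hc⟩ | ⟨N, hid⟩
  · refine (Computable.const (φ c)).of_eq_off_finset ((Finset.range N).map φ.toEmbedding)
      fun a ha => φ.conj_eq_of_notMem_map (g := fun _ => c) (fun x hx => ?_) ha
    exact hc x (by simpa using hx)
  · refine Computable.id.of_eq_off_finset ((Finset.range N).map φ.toEmbedding)
      fun a ha => (φ.conj_eq_of_notMem_map (g := id) (fun x hx => ?_) ha).trans (by simp)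
    exact hid x (by simpa using hx)

/-- If `f` is almost constant or almost the identity, then for every computable linear
order `r` on ℕ isomorphic to the standard order via `φ`, the image function
`φ ∘ f ∘ φ⁻¹` is computable. -/
theorem intrinsically_computable_of_almost_trivial (f : ℕ → ℕ)
    (hf : (∃ c N, ∀ x ≥ N, f x = c) ∨ (∃ N, ∀ x ≥ N, f x = x))
    (r : ℕ → ℕ → Prop) (hlin : IsStrictTotalOrder ℕ r)
    (χ : ℕ → ℕ → Bool) (hχ : Computable fun p : ℕ × ℕ => χ p.1 p.2)
    (hχr : ∀ x y, r x y ↔ χ x y = true)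
    (φ : ℕ ≃ ℕ) (hiso : ∀ x y, x < y ↔ r (φ x) (φ y)) :
    Computable fun a => φ (f (φ.symm a)) :=
  intrinsically_computable_of_almost_trivial_general f hf φ
end

section
/- Let θ(x, y, a₀,…,aₙ) be a quantifier-free formula in the language of linear orders, let a₀ < a₁ < ⋯ < aₙ be natural numbers, and suppose f : ℕ → ℕ is a function such that for all x, y: f(x) = y if and only if (ℕ,<) ⊨ θ(x, y, a₀,…,aₙ). If there exists x₀ > aₙ with f(x₀) ≠ x₀, then f(x₀) < x₀ and moreover f(x) = f(x₀) for all x ≥ x₀ (so f is almost constant). -/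
open FirstOrder FirstOrder.Language

attribute [local instance] FirstOrder.Language.orderStructure

/-!
Order embeddings preserve quantifier-free formulas of the language of orders, so a function
whose graph is quantifier-free definable commutes with every order embedding `ℕ ↪o ℕ` fixing the
parameters. The embeddings used are the shifts that are the identity below some `c > aₙ` and add
`d` from `c` on. If `f x₀ > x₀`, the shift by one from `f x₀` fixes `x₀` but moves `f x₀`, which
is absurd; so `f x₀ < x₀`, and the shift by `x - x₀` from `x₀` fixes `f x₀` and sends `x₀` to `x`.
-/

instance orderStructure_orderedStructure (M : Type*) [LE M] :
    Language.order.OrderedStructure M :=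
  ⟨fun _ => Iff.rfl⟩

theorem FirstOrder.Language.BoundedFormula.IsQF.realize_orderEmbedding_comp
    {M N α : Type*} [LE M] [LE N] {θ : Language.order.Formula α} (hqf : θ.IsQF)
    (g : M ↪o N) (v : α → M) : θ.Realize (g ∘ v) ↔ θ.Realize v := by
  have h := hqf.realize_embedding g (v := v) (xs := default)
  rwa [Subsingleton.elim (g ∘ default) default] at h

def shiftFrom (c d : ℕ) : ℕ ↪o ℕ :=
  OrderEmbedding.ofStrictMono (fun t => if t < c then t else t + d) fun s t hst => by
    dsimp only
    split_ifs <;> omega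

theorem shiftFrom_of_lt {c d t : ℕ} (h : t < c) : shiftFrom c d t = t := if_pos h

theorem shiftFrom_of_le {c d t : ℕ} (h : c ≤ t) : shiftFrom c d t = t + d := if_neg h.not_gt

theorem apply_orderEmbedding_eq_of_isQF_graph {m : ℕ} {θ : Language.order.Formula (Fin (m + 2))}
    (hqf : θ.IsQF) {a : Fin m → ℕ} {f : ℕ → ℕ}
    (hθ : ∀ x y, f x = y ↔ θ.Realize (Fin.cons x (Fin.cons y a)))
    (g : ℕ ↪o ℕ) (hg : ∀ i, g (a i) = a i) (x : ℕ) : f (g x) = g (f x) := by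
  have hga : g ∘ a = a := funext hg
  rw [hθ, ← hga, ← Fin.comp_cons, ← Fin.comp_cons, hqf.realize_orderEmbedding_comp, ← hθ]

/-- Moses-style analysis: if a quantifier-free formula `θ(x, y, a₀, …, aₙ)` in the
language of linear orders defines (over `(ℕ, ≤)`) the graph of a function `f`, where
`a₀ < a₁ < ⋯ < aₙ` are parameters, and there is `x₀ > aₙ` with `f x₀ ≠ x₀`, then
`f x₀ < x₀` and `f x = f x₀` for all `x ≥ x₀` (so `f` is almost constant). -/
theorem qf_definable_function_almost_constant (n : ℕ) (a : Fin (n + 1) → ℕ)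
    (ha : StrictMono a)
    (θ : Language.order.Formula (Fin (n + 3))) (hqf : θ.IsQF)
    (f : ℕ → ℕ)
    (hθ : ∀ x y : ℕ, f x = y ↔ θ.Realize (Fin.cons x (Fin.cons y (fun i => a i))))
    (x₀ : ℕ) (hx₀ : a (Fin.last n) < x₀) (hfx₀ : f x₀ ≠ x₀) :
    f x₀ < x₀ ∧ ∀ x ≥ x₀, f x = f x₀ := by
  have hfix : ∀ c, a (Fin.last n) < c → ∀ d i, shiftFrom c d (a i) = a i := fun c hc _ i =>
    shiftFrom_of_lt ((ha.monotone (Fin.le_last i)).trans_lt hc)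
  have hcomm := apply_orderEmbedding_eq_of_isQF_graph (m := n + 1) hqf hθ
  have hlt : f x₀ < x₀ := by
    refine hfx₀.lt_of_le (not_lt.1 fun hgt => ?_)
    have h := hcomm (shiftFrom (f x₀) 1) (hfix _ (hx₀.trans hgt) 1) x₀
    rw [shiftFrom_of_lt hgt, shiftFrom_of_le le_rfl] at h
    omega
  refine ⟨hlt, fun x hx => ?_⟩
  have h := hcomm (shiftFrom x₀ (x - x₀)) (hfix _ hx₀ _) x₀
  rwa [shiftFrom_of_le le_rfl, shiftFrom_of_lt hlt, Nat.add_sub_cancel' hx] at h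
end

section
/- Every block function f : ℕ → ℕ is a quasi-block function: for every n ∈ ℕ there exists m ≥ n such that the initial segment {0, 1, …, m} is closed under f. -/
/-- `I` is a (nonempty) finite interval of ℕ. -/
def IsNatInterval (I : Set ℕ) : Prop :=
  ∃ m M : ℕ, m ≤ M ∧ I = {x | m ≤ x ∧ x ≤ M}

/-- `I` is closed under `f` and under `f⁻¹`. -/
def ClosedUnder (f : ℕ → ℕ) (I : Set ℕ) : Prop :=
  (∀ x ∈ I, f x ∈ I) ∧ (∀ x ∈ I, ∀ y, f y = x → y ∈ I)

/-- `f` is a block function: every `a` lies in a finite interval closed under `f` and `f⁻¹`. -/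
def IsBlockFunction (f : ℕ → ℕ) : Prop :=
  ∀ a : ℕ, ∃ I : Set ℕ, IsNatInterval I ∧ I.Finite ∧ a ∈ I ∧ ClosedUnder f I

/-- Every block function is a quasi-block function: there are arbitrarily long finite
initial segments `[0; m]` of ℕ closed under `f`. -/
theorem block_function_is_quasi_block (f : ℕ → ℕ) (hf : IsBlockFunction f) :
    ∀ n : ℕ, ∃ m ≥ n, ∀ x ≤ m, f x ≤ m := by
  intro n
  induction n using Nat.strong_induction_on with
  | _ n ih =>
    obtain ⟨I, ⟨a, b, hab, hI⟩, _, hnI, hcl, _⟩ := hf n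
    subst hI
    obtain ⟨han, hnb⟩ := hnI
    rcases Nat.eq_zero_or_pos a with ha0 | hapos
    · refine ⟨b, hnb, fun x hx => ?_⟩
      exact (hcl x ⟨ha0 ▸ Nat.zero_le x, hx⟩).2
    · obtain ⟨m', hm', hm'cl⟩ := ih (a - 1) (lt_of_lt_of_le (Nat.sub_lt hapos one_pos) han)
      rcases le_or_gt b m' with hbm' | hm'b
      · exact ⟨m', le_trans hnb hbm', hm'cl⟩
      · refine ⟨b, hnb, fun x hx => ?_⟩
        rcases le_or_gt x m' with hxm' | hm'x
        · exact le_trans (hm'cl x hxm') (le_of_lt hm'b)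
        · have hax : a ≤ x := by omega
          exact (hcl x ⟨hax, hx⟩).2
end

section
/- Let f : ℕ → ℕ be a quasi-block function that is not a block function, and suppose f has a non-decreasing lower bound diverging to +∞ (i.e., there is a non-decreasing g : ℕ → ℕ with g(n) ≤ f(n) for all n and g(n) → ∞). Then only finitely many initial segments [0;m] of ℕ are closed under both f and f⁻¹. -/
open Filter

/-- `f` is a quasi-block function: arbitrarily long finite initial segments are closed
under `f`. -/
def IsQuasiBlockFunction (f : ℕ → ℕ) : Prop :=
  ∀ n : ℕ, ∃ m ≥ n, ∀ x ≤ m, f x ≤ m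

/-- A proper quasi-block function with a non-decreasing lower bound diverging to `+∞`
has only finitely many initial segments `[0; m]` closed under both `f` and `f⁻¹`. -/
theorem proper_quasi_block_finitely_many_closed_segments (f : ℕ → ℕ)
    (hq : IsQuasiBlockFunction f) (hnb : ¬ IsBlockFunction f)
    (g : ℕ → ℕ) (hmono : Monotone g) (hle : ∀ n, g n ≤ f n)
    (hdiv : Tendsto g atTop atTop) :
    {m : ℕ | (∀ x ≤ m, f x ≤ m) ∧ (∀ y, f y ≤ m → y ≤ m)}.Finite := by
  by_contra h
  apply hnb
  intro a
  obtain ⟨m, hm, ham⟩ := Set.Infinite.exists_gt h a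
  refine ⟨{x | 0 ≤ x ∧ x ≤ m}, ⟨0, m, Nat.zero_le m, rfl⟩, ?_, ⟨Nat.zero_le a, ham.le⟩, ?_, ?_⟩
  · exact (Set.finite_Icc 0 m).subset (fun x hx => ⟨hx.1, hx.2⟩)
  · exact fun x hx => ⟨Nat.zero_le _, hm.1 x hx.2⟩
  · exact fun x hx y hy => ⟨Nat.zero_le _, hm.2 y (hy ▸ hx.2)⟩
end

section
/- Let f : ℕ → ℕ be a block function with infinitely many pairwise non-isomorphic block types, each occurring only finitely often, and let c_f : ℕ → ℕ be its counting function (c_f(n) = number of occurrences of the n-th type in the block decomposition of f). Then the set C⁻ = {(k,n) : k ≤ c_f(n)} is computably enumerable, the set C⁺ = {(k,n) : k ≥ c_f(n)} is co-computably-enumerable, and c_f ≡_T C⁻ ⊕ C⁺; consequently the Turing degree of c_f is a c.e. degree (it contains a c.e. set, namely C⁻ together with the Turing-equivalence witnessed). -/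
/-- Oracle computability: partial recursive in the total oracle `O`. -/
inductive RecursiveInOracle (O : ℕ → ℕ) : (ℕ →. ℕ) → Prop
  | zero : RecursiveInOracle O fun _ => 0
  | succ : RecursiveInOracle O Nat.succ
  | left : RecursiveInOracle O fun n => (Nat.unpair n).1
  | right : RecursiveInOracle O fun n => (Nat.unpair n).2
  | oracle : RecursiveInOracle O O
  | pair {f g : ℕ →. ℕ} : RecursiveInOracle O f → RecursiveInOracle O g →
      RecursiveInOracle O fun n => Nat.pair <$> f n <*> g n
  | comp {f g : ℕ →. ℕ} : RecursiveInOracle O f → RecursiveInOracle O g →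
      RecursiveInOracle O fun n => g n >>= f
  | prec {f g : ℕ →. ℕ} : RecursiveInOracle O f → RecursiveInOracle O g →
      RecursiveInOracle O (Nat.unpaired fun a n =>
        n.rec (f a) fun y IH => do let i ← IH; g (Nat.pair a (Nat.pair y i)))
  | rfind {f : ℕ →. ℕ} : RecursiveInOracle O f →
      RecursiveInOracle O fun a =>
        Nat.rfind fun n => (fun m => m = 0) <$> f (Nat.pair a n)

/-- Turing reducibility between total functions on ℕ. -/
def TuringReducibleFn (f g : ℕ → ℕ) : Prop := RecursiveInOracle g f

/-- Turing equivalence between total functions on ℕ. -/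
def TuringEquiv (f g : ℕ → ℕ) : Prop := TuringReducibleFn f g ∧ TuringReducibleFn g f

open Classical in
/-- Characteristic function of a predicate on ℕ. -/
noncomputable def chi (p : ℕ → Prop) : ℕ → ℕ := fun n => if p n then 1 else 0

/-- Effective join `A ⊕ B` of two predicates on ℕ. -/
def joinPred (p q : ℕ → Prop) : ℕ → Prop :=
  fun n => if n % 2 = 0 then p (n / 2) else q (n / 2)

/-- A predicate on ℕ is computably enumerable. -/
def CEPred (p : ℕ → Prop) : Prop :=
  ∃ f : ℕ →. Unit, Partrec f ∧ ∀ n, p n ↔ (f n).Dom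

/-- Blocks `i` and `j` of the block decomposition given by the boundary function `B`
(the `i`-th block is the interval `[B i; B (i+1))`) are isomorphic as structures
`(I, <, f ↾ I)`: they have the same length and `f` acts the same way on them modulo
the order-isomorphism (shift). -/
def BlockIso (f : ℕ → ℕ) (B : ℕ → ℕ) (i j : ℕ) : Prop :=
  B (i + 1) - B i = B (j + 1) - B j ∧
    ∀ x, B i + x < B (i + 1) → f (B i + x) - B i = f (B j + x) - B j

/-! Among the first `s` blocks, the number of blocks of type `n` is computable in `(s, n)` and
nondecreasing in `s`, with limit `c_f n` since every type occurs only finitely often. Hence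
`k ≤ c_f n` holds iff some stage already counts `k` such blocks, which makes `C⁻` and the
complement of `C⁺` c.e. One query to `c_f` decides membership in `C⁻ ⊕ C⁺`, and conversely
`c_f n` is the least `k` with `(k, n) ∈ C⁺`. Replacing `C⁺` by its complement only flips the
odd bits of the join, so `c_f` is also Turing equivalent to the join of the two c.e. sets. -/

namespace RecursiveInOracle

variable {O : ℕ → ℕ}

theorem of_partrec {f : ℕ →. ℕ} (hf : Nat.Partrec f) : RecursiveInOracle O f := by
  induction hf with
  | zero => exact .zero
  | succ => exact .succ
  | left => exact .left
  | right => exact .right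
  | pair _ _ ihf ihg => exact .pair ihf ihg
  | comp _ _ ihf ihg => exact .comp ihf ihg
  | prec _ _ ihf ihg => exact .prec ihf ihg
  | rfind _ ihf => exact .rfind ihf

theorem of_computable {f : ℕ → ℕ} (hf : Computable f) : RecursiveInOracle O f :=
  of_partrec (Partrec.nat_iff.1 hf.partrec)

theorem subst {O' : ℕ → ℕ} {f : ℕ →. ℕ} (hf : RecursiveInOracle O f)
    (hO : RecursiveInOracle O' O) : RecursiveInOracle O' f := by
  induction hf with
  | zero => exact .zero
  | succ => exact .succ
  | left => exact .left
  | right => exact .right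
  | oracle => exact hO
  | pair _ _ ihf ihg => exact .pair ihf ihg
  | comp _ _ ihf ihg => exact .comp ihf ihg
  | prec _ _ ihf ihg => exact .prec ihf ihg
  | rfind _ ihf => exact .rfind ihf

theorem of_eq {f g : ℕ →. ℕ} (hf : RecursiveInOracle O f) (h : ∀ n, f n = g n) :
    RecursiveInOracle O g :=
  funext h ▸ hf

theorem comp_total {f g : ℕ → ℕ} (hf : RecursiveInOracle O f) (hg : RecursiveInOracle O g) :
    RecursiveInOracle O (fun n => f (g n) : ℕ → ℕ) :=
  (hf.comp hg).of_eq fun _ => Part.bind_some _ _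

theorem pair_total {f g : ℕ → ℕ} (hf : RecursiveInOracle O f) (hg : RecursiveInOracle O g) :
    RecursiveInOracle O (fun n => Nat.pair (f n) (g n) : ℕ → ℕ) :=
  (hf.pair hg).of_eq fun _ => by simp [PFun.coe_val, Seq.seq]

theorem of_eq_zero_iff_le {e c : ℕ → ℕ} (he : RecursiveInOracle O e)
    (h : ∀ n k, e (Nat.pair n k) = 0 ↔ c n ≤ k) : RecursiveInOracle O c := by
  refine he.rfind.of_eq fun n => Part.eq_some_iff.2 (Nat.mem_rfind.2 ⟨?_, fun {m} hm => ?_⟩)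
  · simp [PFun.coe_val, (h n (c n)).2 le_rfl]
  · simp [PFun.coe_val, (h n m).not.2 (Nat.not_le.2 hm)]

end RecursiveInOracle

theorem TuringReducibleFn.trans {f g h : ℕ → ℕ} (hfg : TuringReducibleFn f g)
    (hgh : TuringReducibleFn g h) : TuringReducibleFn f h :=
  RecursiveInOracle.subst hfg hgh

theorem TuringReducibleFn.of_single_query {f g G : ℕ → ℕ} {F : ℕ → ℕ → ℕ}
    (hF : Computable₂ F) (hG : Computable G) (h : ∀ n, f n = F n (g (G n))) :
    TuringReducibleFn f g := by
  have hF' : Computable fun x : ℕ => F x.unpair.1 x.unpair.2 :=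
    hF.comp (Computable.fst.comp Primrec.unpair.to_comp)
      (Computable.snd.comp Primrec.unpair.to_comp)
  open RecursiveInOracle in
  refine ((of_computable hF').comp_total ((of_computable Computable.id).pair_total
    (oracle.comp_total (of_computable hG)))).of_eq fun n => ?_
  simp [h]

theorem TuringEquiv.trans {f g h : ℕ → ℕ} (hfg : TuringEquiv f g) (hgh : TuringEquiv g h) :
    TuringEquiv f h :=
  ⟨hfg.1.trans hgh.1, hgh.2.trans hfg.2⟩

@[simp]
theorem chi_joinPred_two_mul (p q : ℕ → Prop) (n : ℕ) :
    chi (joinPred p q) (2 * n) = chi p n := by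
  classical
  simp [chi, joinPred]

@[simp]
theorem chi_joinPred_two_mul_add_one (p q : ℕ → Prop) (n : ℕ) :
    chi (joinPred p q) (2 * n + 1) = chi q n := by
  classical
  simp [chi, joinPred, Nat.mul_add_div]

@[simp]
theorem chi_not (q : ℕ → Prop) (n : ℕ) : chi (fun x => ¬ q x) n = 1 - chi q n := by
  classical
  by_cases hq : q n <;> simp [chi, hq]

theorem turingReducibleFn_chi_joinPred_not (p q : ℕ → Prop) :
    TuringReducibleFn (chi (joinPred p fun x => ¬ q x)) (chi (joinPred p q)) := by
  refine .of_single_query (F := fun n v => if n % 2 = 0 then v else 1 - v)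
    (Primrec.ite (Primrec.eq.comp (Primrec.nat_mod.comp Primrec.fst (Primrec.const 2))
      (Primrec.const 0)) Primrec.snd
      (Primrec.nat_sub.comp (Primrec.const 1) Primrec.snd)).to_comp
    Computable.id fun n => ?_
  obtain ⟨m, rfl | rfl⟩ := Nat.even_or_odd' n <;> simp

theorem turingEquiv_chi_joinPred_not (p q : ℕ → Prop) :
    TuringEquiv (chi (joinPred p q)) (chi (joinPred p fun x => ¬ q x)) :=
  ⟨by simpa using turingReducibleFn_chi_joinPred_not p fun x => ¬ q x,
    turingReducibleFn_chi_joinPred_not p q⟩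

theorem turingReducibleFn_chi_right_joinPred (p q : ℕ → Prop) :
    TuringReducibleFn (chi q) (chi (joinPred p q)) :=
  .of_single_query (F := fun _ v => v) (G := fun n => 2 * n + 1) Computable.snd
    (Primrec.succ.comp (Primrec.nat_mul.comp (Primrec.const 2) Primrec.id)).to_comp
    fun n => by simp

/-- The sets `C⁻` and `C⁺` of `c`, as predicates on codes `Nat.pair k n`. -/
def hypograph (c : ℕ → ℕ) (p : ℕ) : Prop := p.unpair.1 ≤ c p.unpair.2

def epigraph (c : ℕ → ℕ) (p : ℕ) : Prop := c p.unpair.2 ≤ p.unpair.1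

theorem turingReducibleFn_chi_epigraph (c : ℕ → ℕ) :
    TuringReducibleFn c (chi (epigraph c)) := by
  refine RecursiveInOracle.of_eq_zero_iff_le
    (e := fun x => 1 - chi (epigraph c) (Nat.pair x.unpair.2 x.unpair.1))
    (TuringReducibleFn.of_single_query (F := fun _ v => 1 - v) ?_ ?_ fun _ => rfl) fun n k => ?_
  · exact (Primrec.nat_sub.comp (Primrec.const 1) Primrec.snd).to_comp
  · exact (Primrec₂.natPair.comp (Primrec.snd.comp Primrec.unpair)
      (Primrec.fst.comp Primrec.unpair)).to_comp
  · by_cases h : c n ≤ k <;> simp [chi, epigraph, h]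

theorem turingReducibleFn_chi_joinPred_hypograph_epigraph (c : ℕ → ℕ) :
    TuringReducibleFn (chi (joinPred (hypograph c) (epigraph c))) c := by
  refine .of_single_query (G := fun n => (n / 2).unpair.2)
    (F := fun n v => if n % 2 = 0 then (if (n / 2).unpair.1 ≤ v then 1 else 0)
      else (if v ≤ (n / 2).unpair.1 then 1 else 0)) ?_ ?_ fun n => ?_
  · have hk : Primrec fun x : ℕ × ℕ => (x.1 / 2).unpair.1 :=
      Primrec.fst.comp (Primrec.unpair.comp (Primrec.nat_div.comp Primrec.fst (Primrec.const 2)))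
    exact (Primrec.ite
      (Primrec.eq.comp (Primrec.nat_mod.comp Primrec.fst (Primrec.const 2)) (Primrec.const 0))
      (Primrec.ite (Primrec.nat_le.comp hk Primrec.snd) (Primrec.const 1) (Primrec.const 0))
      (Primrec.ite (Primrec.nat_le.comp Primrec.snd hk) (Primrec.const 1)
        (Primrec.const 0))).to_comp
  · exact (Primrec.snd.comp (Primrec.unpair.comp
      (Primrec.nat_div.comp Primrec.id (Primrec.const 2)))).to_comp
  · obtain ⟨m, rfl | rfl⟩ := Nat.even_or_odd' n <;> simp [Nat.mul_add_div] <;>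
      simp only [chi, hypograph, epigraph] <;> congr

theorem turingEquiv_chi_joinPred_hypograph_epigraph (c : ℕ → ℕ) :
    TuringEquiv c (chi (joinPred (hypograph c) (epigraph c))) :=
  ⟨(turingReducibleFn_chi_epigraph c).trans (turingReducibleFn_chi_right_joinPred _ _),
    turingReducibleFn_chi_joinPred_hypograph_epigraph c⟩

theorem CEPred.of_iff {p q : ℕ → Prop} (hp : CEPred p) (h : ∀ n, p n ↔ q n) : CEPred q :=
  let ⟨f, hf, hdom⟩ := hp
  ⟨f, hf, fun n => (h n).symm.trans (hdom n)⟩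

theorem cePred_exists {g : ℕ → ℕ → Bool} (hg : Computable₂ g) :
    CEPred fun n => ∃ s, g n s = true := by
  refine ⟨fun n => (Nat.rfind fun s => Part.some (g n s)).map fun _ => (),
    (Partrec.rfind hg.partrec₂).map ((Computable.const ()).comp Computable.fst).to₂,
    fun n => ?_⟩
  refine Iff.trans ?_ Nat.rfind_dom.symm
  exact ⟨fun ⟨s, hs⟩ => ⟨s, by simpa using hs, fun _ => trivial⟩,
    fun ⟨s, hs, _⟩ => ⟨s, by simpa using hs⟩⟩

theorem CEPred.joinPred {p q : ℕ → Prop} (hp : CEPred p) (hq : CEPred q) :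
    CEPred (joinPred p q) := by
  obtain ⟨f, hf, hfdom⟩ := hp
  obtain ⟨g, hg, hgdom⟩ := hq
  have hdiv : Computable fun n : ℕ => n / 2 :=
    (Primrec.nat_div.comp Primrec.id (Primrec.const 2)).to_comp
  refine ⟨fun n => bif n % 2 == 0 then f (n / 2) else g (n / 2),
    Partrec.cond (Primrec.beq.comp (Primrec.nat_mod.comp Primrec.id (Primrec.const 2))
      (Primrec.const 0)).to_comp (hf.comp hdiv) (hg.comp hdiv), fun n => ?_⟩
  by_cases hn : n % 2 = 0 <;> simp [_root_.joinPred, Bool.cond_eq_ite, hn, hfdom, hgdom]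

section LeftApproximation

variable {c : ℕ → ℕ} {g : ℕ → ℕ → ℕ}

theorem cePred_le_of_approx {a b : ℕ → ℕ} (ha : Computable a) (hb : Computable b)
    (hg : Computable₂ g) (hc : ∀ k n, k ≤ c n ↔ ∃ s, k ≤ g s n) :
    CEPred fun p => a p ≤ c (b p) :=
  (cePred_exists (g := fun p s => decide (a p ≤ g s (b p)))
    (Primrec.nat_le.decide.to_comp.comp (ha.comp Computable.fst)
      (hg.comp Computable.snd (hb.comp Computable.fst)))).of_iff fun p => by simp [hc]

theorem cePred_hypograph_of_approx (hg : Computable₂ g)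
    (hc : ∀ k n, k ≤ c n ↔ ∃ s, k ≤ g s n) : CEPred (hypograph c) :=
  cePred_le_of_approx (Computable.fst.comp Primrec.unpair.to_comp)
    (Computable.snd.comp Primrec.unpair.to_comp) hg hc

theorem cePred_not_epigraph_of_approx (hg : Computable₂ g)
    (hc : ∀ k n, k ≤ c n ↔ ∃ s, k ≤ g s n) : CEPred fun p => ¬ epigraph c p :=
  (cePred_le_of_approx (Computable.succ.comp (Computable.fst.comp Primrec.unpair.to_comp))
    (Computable.snd.comp Primrec.unpair.to_comp) hg hc).of_iff fun _ => Nat.not_le.symm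

end LeftApproximation

theorem le_ncard_iff_exists_le_count {p : ℕ → Prop} [DecidablePred p] (hp : {i | p i}.Finite)
    (k : ℕ) : k ≤ {i | p i}.ncard ↔ ∃ s, k ≤ Nat.count p s := by
  simp only [Nat.count_eq_card_filter_range, ← Set.ncard_coe_finset]
  constructor
  · intro hk
    obtain ⟨b, hb⟩ := hp.bddAbove
    refine ⟨b + 1, hk.trans_eq (congrArg Set.ncard ?_)⟩
    ext i
    simpa using fun hi => Nat.lt_succ_of_le (hb hi)
  · rintro ⟨s, hs⟩
    exact hs.trans (Set.ncard_le_ncard (fun i hi => by simp_all) hp)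

theorem computable₂_count_fiber {t : ℕ → ℕ} (ht : Computable t) :
    Computable₂ fun s n => Nat.count (fun i => t i = n) s := by
  have hind : Primrec fun z : ℕ × ℕ => if z.1 = z.2 then 1 else 0 :=
    Primrec.ite Primrec.eq (Primrec.const 1) (Primrec.const 0)
  have hstep :
      Computable₂ fun (x : ℕ × ℕ) (y : ℕ × ℕ) => y.2 + if t y.1 = x.2 then 1 else 0 :=
    Primrec.nat_add.to_comp.comp (Computable.snd.comp Computable.snd)
      (hind.to_comp.comp ((ht.comp (Computable.fst.comp Computable.snd)).pair
        (Computable.snd.comp Computable.fst)))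
  refine (Computable.nat_rec Computable.fst (Computable.const 0) hstep).of_eq fun x => ?_
  induction x.1 with
  | zero => rfl
  | succ s ih => simp [Nat.count_succ, ih]

theorem counting_function_ce_degree_general
    (t : ℕ → ℕ) (ht : Computable t)
    (hfin : ∀ n : ℕ, {i : ℕ | t i = n}.Finite)
    (cf : ℕ → ℕ) (hcf : ∀ n : ℕ, cf n = {i : ℕ | t i = n}.ncard) :
    CEPred (fun p : ℕ => p.unpair.1 ≤ cf p.unpair.2) ∧
    CEPred (fun p : ℕ => ¬ cf p.unpair.2 ≤ p.unpair.1) ∧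
    TuringEquiv cf (chi (joinPred (fun p => p.unpair.1 ≤ cf p.unpair.2)
      (fun p => cf p.unpair.2 ≤ p.unpair.1))) ∧
    ∃ W : ℕ → Prop, CEPred W ∧ TuringEquiv cf (chi W) := by
  have happrox : ∀ k n, k ≤ cf n ↔ ∃ s, k ≤ Nat.count (fun i => t i = n) s := fun k n =>
    hcf n ▸ le_ncard_iff_exists_le_count (hfin n) k
  have hcount := computable₂_count_fiber ht
  have hlower := cePred_hypograph_of_approx hcount happrox
  have hupper := cePred_not_epigraph_of_approx hcount happrox
  have hequiv := turingEquiv_chi_joinPred_hypograph_epigraph cf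
  exact ⟨hlower, hupper, hequiv, _, hlower.joinPred hupper,
    hequiv.trans (turingEquiv_chi_joinPred_not _ _)⟩

/-- If `f` is a computable block function whose block decomposition (given by the
computable boundary function `B`) has infinitely many pairwise non-isomorphic types,
each occurring only finitely often, enumerated one-to-one by a computable type function
`t`, and `c_f` is the counting function of the types, then
`C⁻ = {(k,n) : k ≤ c_f n}` is c.e., `C⁺ = {(k,n) : k ≥ c_f n}` is co-c.e.,
`c_f ≡_T C⁻ ⊕ C⁺`, and the Turing degree of `c_f` is a c.e. degree. -/
theorem counting_function_ce_degree (f : ℕ → ℕ) (hf : Computable f)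
    (B : ℕ → ℕ) (hB : Computable B) (hB0 : B 0 = 0) (hBmono : StrictMono B)
    (hclosed : ∀ i, (∀ x, B i ≤ x → x < B (i + 1) → B i ≤ f x ∧ f x < B (i + 1)) ∧
      (∀ x y, B i ≤ x → x < B (i + 1) → f y = x → B i ≤ y ∧ y < B (i + 1)))
    (t : ℕ → ℕ) (ht : Computable t) (htsurj : Function.Surjective t)
    (htiso : ∀ i j, t i = t j ↔ BlockIso f B i j)
    (hfin : ∀ n : ℕ, {i : ℕ | t i = n}.Finite)
    (cf : ℕ → ℕ) (hcf : ∀ n : ℕ, cf n = {i : ℕ | t i = n}.ncard) :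
    CEPred (fun p : ℕ => p.unpair.1 ≤ cf p.unpair.2) ∧
    CEPred (fun p : ℕ => ¬ cf p.unpair.2 ≤ p.unpair.1) ∧
    TuringEquiv cf (chi (joinPred (fun p => p.unpair.1 ≤ cf p.unpair.2)
      (fun p => cf p.unpair.2 ≤ p.unpair.1))) ∧
    ∃ W : ℕ → Prop, CEPred W ∧ TuringEquiv cf (chi W) :=
  counting_function_ce_degree_general t ht hfin cf hcf
end
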